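/- Let α be a self-dual basis of F_{q^m} over F_q, let k be an integer with 1 ≤ k and 2k ≤ m, and let 0 ≤ e ≤ m−1. Then the Gabidulin code G_k(α) is e-Galois self-orthogonal (i.e., G_k(α) ⊆ G_k(α)^{⊥_e}) if and only if e = k or k+1 ≤ e ≤ m−k. -/

import Mathlib

/-- The Gabidulin code `G_k(α)`: the `F`-span of the vectors `α^{q^i}`, `i = 0, …, k-1`. -/
noncomputable def gab {F : Type*} [Field F] (q : ℕ) {m : ℕ} (k : ℕ) (α : Fin m → F) :
    Submodule F (Fin m → F) :=
  Submodule.span F (Set.range fun i : Fin k => fun j : Fin m => α j ^ q ^ (i : ℕ))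

/-- The `e`-Galois dual of a linear code `C ⊆ F^n`,
    with respect to the inner product `x ·_e y = ∑ i, x i * (y i)^(q^e)`. -/
def galoisDual {F : Type*} [Field F] (q e : ℕ) {n : ℕ} (C : Submodule F (Fin n → F)) :
    Submodule F (Fin n → F) where
  carrier := {x | ∀ c ∈ C, ∑ i, x i * c i ^ q ^ e = 0}
  add_mem' := by
    intro a b ha hb c hc
    simp only [Set.mem_setOf_eq] at *
    simp [Pi.add_apply, add_mul, Finset.sum_add_distrib, ha c hc, hb c hc]
  zero_mem' := by
    intro c hc
    simp
  smul_mem' := by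
    intro r a ha c hc
    simp only [Set.mem_setOf_eq] at *
    simp [Pi.smul_apply, smul_eq_mul, mul_assoc, ← Finset.mul_sum, ha c hc]

/-!
Since `Tr(x) = ∑_{i < m} x ^ q ^ i`, self-duality of `α` says exactly that the Moore matrix
`M = (α_j ^ q ^ i)` satisfies `Mᵀ M = 1`; hence also `M Mᵀ = 1`, i.e. the `e`-Galois product of the
generators `α ^ q ^ i` and `α ^ q ^ j` of `G_k(α)` is `1` if `i ≡ j + e (mod m)` and `0` otherwise.
As `x ↦ x ^ q ^ e` is additive, `G_k(α)` is `e`-self-orthogonal iff no `i, j < k` satisfy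
`i ≡ j + e (mod m)`, which for `2k ≤ m` and `e < m` means `k ≤ e ≤ m - k`.
-/

open Module FiniteField
open scoped Matrix

section FiniteFieldExtension

variable (K : Type*) {F : Type*} [Field K] [Fintype K] [Field F] [Algebra K F]

theorem frobeniusAlgHom_pow_apply (n : ℕ) (x : F) :
    (frobeniusAlgHom K F ^ n) x = x ^ Fintype.card K ^ n := by
  rw [AlgHom.coe_pow, coe_frobeniusAlgHom, pow_iterate]

theorem pow_card_pow_mod_finrank [Finite F] (x : F) (n : ℕ) :
    x ^ Fintype.card K ^ (n % finrank K F) = x ^ Fintype.card K ^ n := by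
  rw [← frobeniusAlgHom_pow_apply, ← orderOf_frobeniusAlgHom, pow_mod_orderOf,
    frobeniusAlgHom_pow_apply]

def IsSelfDual {ι : Type*} [DecidableEq ι] (α : ι → F) : Prop :=
  ∀ i j, Algebra.trace K F (α i * α j) = if i = j then 1 else 0

end FiniteFieldExtension

def mooreMatrix {F : Type*} [Field F] {m : ℕ} (q : ℕ) (α : Fin m → F) :
    Matrix (Fin m) (Fin m) F :=
  Matrix.of fun i j => α j ^ q ^ (i : ℕ)

namespace IsSelfDual

variable {K F : Type*} [Field K] [Fintype K] [Field F] [Finite F] [Algebra K F]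
  {m : ℕ} {α : Fin m → F}

theorem mooreMatrix_transpose_mul (hm : finrank K F = m) (hα : IsSelfDual K α) :
    (mooreMatrix (Fintype.card K) α)ᵀ * mooreMatrix (Fintype.card K) α = 1 := by
  subst hm
  ext i j
  have htrace := algebraMap_trace_eq_sum_pow K F (α i * α j)
  rw [hα i j, Finset.sum_range, Nat.card_eq_fintype_card] at htrace
  simp only [Matrix.mul_apply, Matrix.transpose_apply, mooreMatrix, Matrix.of_apply, ← mul_pow,
    ← htrace, Matrix.one_apply]
  split_ifs <;> simp

theorem mooreMatrix_mul_transpose (hm : finrank K F = m) (hα : IsSelfDual K α) :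
    mooreMatrix (Fintype.card K) α * (mooreMatrix (Fintype.card K) α)ᵀ = 1 :=
  mul_eq_one_comm.mp (hα.mooreMatrix_transpose_mul hm)

theorem sum_pow_mul_pow (hm : finrank K F = m) (hα : IsSelfDual K α) (a c : ℕ) :
    ∑ j, α j ^ Fintype.card K ^ a * α j ^ Fintype.card K ^ c =
      if a % m = c % m then 1 else 0 := by
  subst hm
  have hMMt := congr_fun₂ (hα.mooreMatrix_mul_transpose rfl)
    ⟨a % _, Nat.mod_lt a finrank_pos⟩ ⟨c % _, Nat.mod_lt c finrank_pos⟩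
  simpa only [Matrix.mul_apply, Matrix.transpose_apply, mooreMatrix, Matrix.of_apply,
    Matrix.one_apply, Fin.mk.injEq, pow_card_pow_mod_finrank] using hMMt

end IsSelfDual

section GaloisDual

variable (K : Type*) {F : Type*} [Field K] [Fintype K] [Field F] [Algebra K F] {n : ℕ}

theorem mem_galoisDual_span_iff (e : ℕ) {T : Set (Fin n → F)} {x : Fin n → F} :
    x ∈ galoisDual (Fintype.card K) e (Submodule.span F T) ↔
      ∀ y ∈ T, ∑ i, x i * y i ^ Fintype.card K ^ e = 0 := by
  refine ⟨fun hx y hy => hx y (Submodule.subset_span hy), fun hT c hc => ?_⟩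
  induction hc using Submodule.span_induction with
  | mem y hy => exact hT y hy
  | zero => simp [zero_pow (pow_ne_zero e Fintype.card_ne_zero)]
  | add u v _ _ hu hv =>
    simp only [Pi.add_apply, ← frobeniusAlgHom_pow_apply K, map_add, mul_add,
      Finset.sum_add_distrib] at hu hv ⊢
    rw [hu, hv, add_zero]
  | smul r u _ hu =>
    simp only [Pi.smul_apply, smul_eq_mul, mul_pow, mul_left_comm (x _), ← Finset.mul_sum, hu,
      mul_zero]

theorem span_le_galoisDual_span_iff (e : ℕ) {S T : Set (Fin n → F)} :
    Submodule.span F S ≤ galoisDual (Fintype.card K) e (Submodule.span F T) ↔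
      ∀ x ∈ S, ∀ y ∈ T, ∑ i, x i * y i ^ Fintype.card K ^ e = 0 := by
  simp only [Submodule.span_le, Set.subset_def, SetLike.mem_coe, mem_galoisDual_span_iff]

end GaloisDual

theorem forall_lt_mod_ne_add_mod_iff {m k e : ℕ} (hk : 2 * k ≤ m) (he : e ≤ m - 1) :
    (∀ i < k, ∀ j < k, i % m ≠ (j + e) % m) ↔ (e = k ∨ (k + 1 ≤ e ∧ e ≤ m - k)) := by
  refine ⟨fun h => ?_, fun hrange i hi j hj => ?_⟩
  · have hke : k ≤ e := by
      by_contra! hek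
      exact h e hek 0 (by omega) (by rw [zero_add])
    have hem : e ≤ m - k := by
      by_contra! hek
      refine h 0 (by omega) (m - e) (by omega) ?_
      rw [Nat.sub_add_cancel (by omega), Nat.mod_self, Nat.zero_mod]
    omega
  · have hlt : j + e < m := by omega
    rw [Nat.mod_eq_of_lt (by omega), Nat.mod_eq_of_lt hlt]
    omega

theorem gab_selfOrthogonal_iff_general
    (q m : ℕ)
    (K F : Type) [Field K] [Field F] [Algebra K F] [Fintype K] [Fintype F]
    (hK : Fintype.card K = q) (hF : Fintype.card F = q ^ m)
    (α : Fin m → F)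
    (hsd : ∀ i j, Algebra.trace K F (α i * α j) = if i = j then 1 else 0)
    (k e : ℕ) (hk2 : 2 * k ≤ m) (he : e ≤ m - 1) :
    gab q k α ≤ galoisDual q e (gab q k α) ↔ (e = k ∨ (k + 1 ≤ e ∧ e ≤ m - k)) := by
  subst hK
  have hfinrank : finrank K F = m :=
    Nat.pow_right_injective Fintype.one_lt_card (card_eq_pow_finrank.symm.trans hF)
  have hinner (i j : ℕ) : ∑ t, α t ^ Fintype.card K ^ i * (α t ^ Fintype.card K ^ j) ^
      Fintype.card K ^ e = if i % m = (j + e) % m then 1 else 0 := by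
    simp only [← pow_mul, ← pow_add (Fintype.card K)]
    exact IsSelfDual.sum_pow_mul_pow hfinrank hsd i (j + e)
  rw [gab, span_le_galoisDual_span_iff, ← forall_lt_mod_ne_add_mod_iff hk2 he]
  simp [hinner, Fin.forall_iff]

/-- For a self-dual basis `α` and `1 ≤ k` with `2k ≤ m`, the Gabidulin code `G_k(α)` is
`e`-Galois self-orthogonal if and only if `e = k` or `k + 1 ≤ e ≤ m - k`. -/
theorem gab_selfOrthogonal_iff
    (q m : ℕ) (hq : IsPrimePow q) (hm : 0 < m)
    (K F : Type) [Field K] [Field F] [Algebra K F] [Fintype K] [Fintype F]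
    (hK : Fintype.card K = q) (hF : Fintype.card F = q ^ m)
    (α : Fin m → F) (hα : ∃ b : Module.Basis (Fin m) K F, ⇑b = α)
    (hsd : ∀ i j, Algebra.trace K F (α i * α j) = if i = j then 1 else 0)
    (k e : ℕ) (hk1 : 1 ≤ k) (hk2 : 2 * k ≤ m) (he : e ≤ m - 1) :
    gab q k α ≤ galoisDual q e (gab q k α) ↔ (e = k ∨ (k + 1 ≤ e ∧ e ≤ m - k)) :=
  gab_selfOrthogonal_iff_general q m K F hK hF α hsd k e hk2 he
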